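/- For all real x₃, z₂, u₂, y₂ satisfying y₂ = x₃ − 0.2·u₂, and for any ψ₂ : ℝ → ℝ with ψ₂(r)·r ≥ 0 for all r: (−5·x₃² − x₃·ψ₂(x₃) + u₂·x₃) + z₂·(−z₂ + y₂) + y₂² + y₂·(3·z₂ + u₂) ≤ −(z₂ − 2·y₂)² ≤ 0. -/
import Mathlib


theorem stmt_3 (ψ₂ : ℝ → ℝ) (hψ₂ : ∀ r : ℝ, ψ₂ r * r ≥ 0) :
    ∀ x₃ z₂ u₂ y₂ : ℝ, y₂ = x₃ - 0.2 * u₂ →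
      (-5 * x₃ ^ 2 - x₃ * ψ₂ x₃ + u₂ * x₃) + z₂ * (-z₂ + y₂)
          + y₂ ^ 2 + y₂ * (3 * z₂ + u₂) ≤ -(z₂ - 2 * y₂) ^ 2
        ∧ -(z₂ - 2 * y₂) ^ 2 ≤ 0 := by
  intro x₃ z₂ u₂ y₂ hy
  have h := hψ₂ x₃
  constructor
  · subst hy; nlinarith [h]
  · nlinarith [sq_nonneg (z₂ - 2 * y₂)]
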